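/- arXiv:2211.05433 — 2 statements merged into one kernel-verified Lean document; each statement's English description precedes it below -/
import Mathlib

section
/- Let ε > 0, d ≥ 1, k ≥ 1, and for each j = 1,…,k let X^j ∈ ℝ^{d×m_j} with m_j ≥ 1. Let X = [X^1,…,X^k] ∈ ℝ^{d×m} be the horizontal concatenation with m = Σ_j m_j, and let X̄ and X̄^j be the matrices X and X^j centered by their respective column means. Then log det(I_d + (d/(mε²))·X̄X̄ᵀ) ≥ Σ_{j=1}^k (m_j/m)·log det(I_d + (d/(m_jε²))·X̄^j(X̄^j)ᵀ). -/
open Matrix BigOperators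

/-- Column mean of a matrix `Y : ℝ^{d×n}` (columns indexed by `ι`). -/
noncomputable def colMean {d : ℕ} {ι : Type} [Fintype ι] (Y : Matrix (Fin d) ι ℝ) :
    Fin d → ℝ :=
  fun i => (∑ l, Y i l) / (Fintype.card ι)

/-- Centered matrix `Ȳ = Y - μ(Y)·1_{1×n}`. -/
noncomputable def centered {d : ℕ} {ι : Type} [Fintype ι] (Y : Matrix (Fin d) ι ℝ) :
    Matrix (Fin d) ι ℝ :=
  Matrix.of fun i l => Y i l - colMean Y i

/-- Horizontal concatenation `[X^1, …, X^k]` of matrices, columns indexed by a sigma type. -/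
def hconcat {d k : ℕ} {m : Fin k → ℕ} (Xc : (j : Fin k) → Matrix (Fin d) (Fin (m j)) ℝ) :
    Matrix (Fin d) ((j : Fin k) × Fin (m j)) ℝ :=
  Matrix.of fun i p => Xc p.1 i p.2

/-!
The scatter matrix of the concatenation splits as the sum of the within-group scatters
`Sⱼ = X̄ʲ(X̄ʲ)ᵀ` plus the positive semidefinite between-group scatter
`∑ⱼ mⱼ (μⱼ - μ)(μⱼ - μ)ᵀ`, and `det` is monotone on positive definite matrices, so it suffices
to bound `log det (I + c ∑ⱼ Sⱼ)` with `c = d / (m ε²)`. Since `(mⱼ / m) · d / (mⱼ ε²) = c`, the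
matrix `I + c ∑ⱼ Sⱼ` is the convex combination `∑ⱼ (mⱼ / m) (I + cⱼ Sⱼ)`, and Jensen's inequality
for the concave function `log det` finishes the proof. Concavity of `log det` reduces, after
congruence by `A^{-1/2}`, to concavity of `log` on the eigenvalues.
-/

namespace Matrix

theorem convex_setOf_posDef {n : Type*} : Convex ℝ {A : Matrix n n ℝ | A.PosDef} := by
  intro A hA B hB a b ha hb hab
  rcases ha.eq_or_lt with rfl | ha
  · rw [zero_add] at hab
    simpa [hab] using hB
  · exact (hA.smul ha).add_posSemidef (hB.posSemidef.smul hb)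

variable {n : Type*} [Fintype n] [DecidableEq n]

theorem IsHermitian.det_cfc {A : Matrix n n ℝ} (hA : A.IsHermitian) (f : ℝ → ℝ) :
    (cfc f A).det = ∏ i, f (hA.eigenvalues i) := by
  rw [hA.cfc_eq]
  simp [IsHermitian.cfc, -Unitary.conjStarAlgAut_apply]

theorem IsHermitian.det_smul_one_add_smul {A : Matrix n n ℝ} (hA : A.IsHermitian) (a b : ℝ) :
    (a • 1 + b • A).det = ∏ i, (a + b * hA.eigenvalues i) := by
  rw [← hA.det_cfc (fun x => a + b * x), cfc_add .., cfc_const_mul .., cfc_const .., cfc_id' ..,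
    Algebra.algebraMap_eq_smul_one]

theorem PosSemidef.one_le_det_one_add {A : Matrix n n ℝ} (hA : A.PosSemidef) :
    1 ≤ (1 + A).det := by
  simpa using (Finset.one_le_prod fun i _ => by simpa using hA.eigenvalues_nonneg i).trans_eq
    (hA.isHermitian.det_smul_one_add_smul 1 1).symm

theorem PosDef.mul_log_det_le_log_det_smul_one_add_smul {A : Matrix n n ℝ} (hA : A.PosDef)
    {a b : ℝ} (ha : 0 ≤ a) (hb : 0 ≤ b) (hab : a + b = 1) :
    b * Real.log A.det ≤ Real.log (a • 1 + b • A).det := by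
  have hpos i := hA.eigenvalues_pos i
  have hfac i : 0 < a + b * hA.isHermitian.eigenvalues i := by
    rcases hb.eq_or_lt with rfl | hb
    · rw [add_zero] at hab
      simp [hab]
    · have := hpos i; positivity
  rw [hA.isHermitian.det_smul_one_add_smul, hA.isHermitian.det_eq_prod_eigenvalues]
  simp only [RCLike.ofReal_real_eq_id, id]
  rw [Real.log_prod fun i _ => (hfac i).ne', Real.log_prod fun i _ => (hpos i).ne', Finset.mul_sum]
  gcongr with i
  simpa using strictConcaveOn_log_Ioi.concaveOn.2 (Set.mem_Ioi.2 one_pos) (hpos i) ha hb hab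

open scoped MatrixOrder

theorem PosDef.det_smul_add_smul {A : Matrix n n ℝ} (hA : A.PosDef) (B : Matrix n n ℝ) (a b : ℝ) :
    (a • A + b • B).det = A.det * (a • 1 + b • ((CFC.sqrt A)⁻¹ * B * (CFC.sqrt A)⁻¹)).det := by
  set S := CFC.sqrt A
  have hSS : S * S = A := CFC.sqrt_mul_sqrt_self A hA.posSemidef.nonneg
  have hS : IsUnit S.det := (isUnit_iff_isUnit_det S).mp ((CFC.isUnit_sqrt_iff A).mpr hA.isUnit)
  have hconj : a • A + b • B = S * (a • 1 + b • (S⁻¹ * B * S⁻¹)) * S := by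
    simp only [Matrix.mul_add, Matrix.add_mul, Matrix.mul_smul, Matrix.smul_mul, Matrix.mul_one,
      hSS, ← Matrix.mul_assoc, mul_nonsing_inv _ hS, Matrix.one_mul]
    simp only [Matrix.mul_assoc, nonsing_inv_mul _ hS, Matrix.mul_one]
  rw [hconj, det_mul, det_mul, ← hSS, det_mul]
  ring

theorem PosSemidef.inv_sqrt_mul_mul_inv_sqrt {A B : Matrix n n ℝ} (hB : B.PosSemidef) :
    ((CFC.sqrt A)⁻¹ * B * (CFC.sqrt A)⁻¹).PosSemidef := by
  have hS : (CFC.sqrt A)⁻¹.IsHermitian := (CFC.sqrt_nonneg A).posSemidef.isHermitian.inv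
  simpa only [hS.eq] using hB.mul_mul_conjTranspose_same (CFC.sqrt A)⁻¹

theorem PosDef.det_le_det_add {A B : Matrix n n ℝ} (hA : A.PosDef) (hB : B.PosSemidef) :
    A.det ≤ (A + B).det := by
  have h := hA.det_smul_add_smul B 1 1
  simp only [one_smul] at h
  rw [h]
  exact le_mul_of_one_le_right hA.det_pos.le hB.inv_sqrt_mul_mul_inv_sqrt.one_le_det_one_add

theorem concaveOn_log_det :
    ConcaveOn ℝ {A : Matrix n n ℝ | A.PosDef} fun A => Real.log A.det := by
  refine ⟨convex_setOf_posDef, fun A hA B hB a b ha hb hab => ?_⟩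
  set C := (CFC.sqrt A)⁻¹ * B * (CFC.sqrt A)⁻¹
  have hdetB : B.det = A.det * C.det := by
    simpa only [zero_smul, one_smul, zero_add] using hA.det_smul_add_smul B 0 1
  have hC : C.PosDef :=
    hB.posSemidef.inv_sqrt_mul_mul_inv_sqrt.posDef_iff_det_ne_zero.mpr fun h => by
      rw [h, mul_zero] at hdetB
      exact hB.det_pos.ne' hdetB
  have hmid : (a • 1 + b • C).PosDef := convex_setOf_posDef PosDef.one hC ha hb hab
  have hA0 := hA.det_pos
  have hlog := hC.mul_log_det_le_log_det_smul_one_add_smul ha hb hab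
  simp only [smul_eq_mul]
  rw [hA.det_smul_add_smul, Real.log_mul hA0.ne' hmid.det_pos.ne', hdetB,
    Real.log_mul hA0.ne' hC.det_pos.ne']
  obtain rfl : a = 1 - b := by linarith
  linarith

end Matrix

section Scatter

variable {d : ℕ} {ι : Type} [Fintype ι]

theorem sum_centered_apply (Y : Matrix (Fin d) ι ℝ) (i : Fin d) : ∑ l, centered Y i l = 0 := by
  simp only [centered, colMean, of_apply, Finset.sum_sub_distrib, Finset.sum_const,
    Finset.card_univ, nsmul_eq_mul]
  rcases isEmpty_or_nonempty ι with hι | hι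
  · simp
  · rw [mul_div_cancel₀ _ (by positivity), sub_self]

theorem sub_mul_transpose_sub (Y : Matrix (Fin d) ι ℝ) (v : Fin d → ℝ) :
    (of fun i l => Y i l - v i) * (of fun i l => Y i l - v i)ᵀ =
      centered Y * (centered Y)ᵀ +
        (Fintype.card ι : ℝ) • vecMulVec (colMean Y - v) (colMean Y - v) := by
  have hY i l : Y i l - v i = centered Y i l + (colMean Y - v) i := by
    simp [centered]
  ext i i'
  simp only [mul_apply, transpose_apply, of_apply, hY, Matrix.add_apply, Matrix.smul_apply,
    vecMulVec_apply, add_mul, mul_add, Finset.sum_add_distrib, ← Finset.sum_mul, ← Finset.mul_sum,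
    sum_centered_apply, Finset.sum_const, Finset.card_univ, nsmul_eq_mul, smul_eq_mul]
  ring

theorem centered_hconcat_mul_transpose {k : ℕ} {m : Fin k → ℕ}
    (Xc : (j : Fin k) → Matrix (Fin d) (Fin (m j)) ℝ) :
    centered (hconcat Xc) * (centered (hconcat Xc))ᵀ =
      ∑ j, (centered (Xc j) * (centered (Xc j))ᵀ +
        (m j : ℝ) • vecMulVec (colMean (Xc j) - colMean (hconcat Xc))
          (colMean (Xc j) - colMean (hconcat Xc))) := by
  trans ∑ j, (of fun i l => Xc j i l - colMean (hconcat Xc) i) *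
    (of fun i l => Xc j i l - colMean (hconcat Xc) i)ᵀ
  · ext i i'
    simp only [mul_apply, Matrix.sum_apply, transpose_apply, of_apply, Fintype.sum_sigma, centered,
      hconcat]
  · simp only [sub_mul_transpose_sub, Fintype.card_fin]

end Scatter
theorem stmt3_general (ε : ℝ) (d k : ℕ) (hk : 1 ≤ k)
    (m : Fin k → ℕ) (hm : ∀ j, 1 ≤ m j)
    (Xc : (j : Fin k) → Matrix (Fin d) (Fin (m j)) ℝ) :
    Real.log
        (Matrix.det
          ((1 : Matrix (Fin d) (Fin d) ℝ) +
            ((d : ℝ) / (((∑ j, m j : ℕ) : ℝ) * ε ^ 2)) •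
              (centered (hconcat Xc) * (centered (hconcat Xc))ᵀ)))
    ≥ ∑ j,
        ((m j : ℝ) / ((∑ j, m j : ℕ) : ℝ)) *
          Real.log
            (Matrix.det
              ((1 : Matrix (Fin d) (Fin d) ℝ) +
                ((d : ℝ) / ((m j : ℝ) * ε ^ 2)) •
                  (centered (Xc j) * (centered (Xc j))ᵀ))) := by
  set N : ℝ := ((∑ j, m j : ℕ) : ℝ)
  set c : ℝ := d / (N * ε ^ 2)
  set S := fun j => centered (Xc j) * (centered (Xc j))ᵀ
  have hS j : (S j).PosSemidef := by
    simpa using posSemidef_self_mul_conjTranspose (centered (Xc j))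
  have hN : 0 < N := Nat.cast_pos.2 (Finset.sum_pos (fun j _ => hm j) ⟨⟨0, hk⟩, Finset.mem_univ _⟩)
  have hw : ∑ j, (m j : ℝ) / N = 1 := by
    rw [← Finset.sum_div, ← Nat.cast_sum, div_self hN.ne']
  have hwc j : (m j : ℝ) / N * (d / (m j * ε ^ 2)) = c := by
    have : (m j : ℝ) ≠ 0 := by have := hm j; positivity
    rw [div_mul_div_comm, mul_left_comm N, mul_div_mul_left _ _ this]
  have hcomb : ∑ j, ((m j : ℝ) / N) • (1 + (d / (m j * ε ^ 2)) • S j) = 1 + c • ∑ j, S j := by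
    simp only [smul_add, smul_smul, hwc, Finset.sum_add_distrib, ← Finset.sum_smul, hw, one_smul,
      Finset.smul_sum]
  have hjensen := concaveOn_log_det.le_map_sum (t := Finset.univ)
    (w := fun j => (m j : ℝ) / N) (p := fun j => 1 + (d / (m j * ε ^ 2)) • S j)
    (fun j _ => by positivity) hw fun j _ => PosDef.one.add_posSemidef ((hS j).smul (by positivity))
  have hmid : (1 + c • ∑ j, S j).PosDef :=
    PosDef.one.add_posSemidef ((posSemidef_sum _ fun j _ => hS j).smul (by positivity))
  rw [centered_hconcat_mul_transpose, Finset.sum_add_distrib, smul_add, ← add_assoc, ge_iff_le]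
  simp only [smul_eq_mul, hcomb] at hjensen
  calc _ ≤ Real.log (1 + c • ∑ j, S j).det := hjensen
    _ ≤ _ := Real.log_le_log hmid.det_pos <| hmid.det_le_det_add <|
      (posSemidef_sum _ fun j _ => (posSemidef_vecMulVec_self_star _).smul (by positivity)).smul
        (by positivity)

theorem stmt3 (ε : ℝ) (hε : 0 < ε) (d k : ℕ) (hd : 1 ≤ d) (hk : 1 ≤ k)
    (m : Fin k → ℕ) (hm : ∀ j, 1 ≤ m j)
    (Xc : (j : Fin k) → Matrix (Fin d) (Fin (m j)) ℝ) :
    Real.log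
        (Matrix.det
          ((1 : Matrix (Fin d) (Fin d) ℝ) +
            ((d : ℝ) / (((∑ j, m j : ℕ) : ℝ) * ε ^ 2)) •
              (centered (hconcat Xc) * (centered (hconcat Xc))ᵀ)))
    ≥ ∑ j,
        ((m j : ℝ) / ((∑ j, m j : ℕ) : ℝ)) *
          Real.log
            (Matrix.det
              ((1 : Matrix (Fin d) (Fin d) ℝ) +
                ((d : ℝ) / ((m j : ℝ) * ε ^ 2)) •
                  (centered (Xc j) * (centered (Xc j))ᵀ))) :=
  stmt3_general ε d k hk m hm Xc
end

section
/- Let ε > 0, d ≥ 1, k ≥ 1, and for each j = 1,…,k let X^j ∈ ℝ^{d×m_j} with m_j ≥ 1. Let X = [X^1,…,X^k] ∈ ℝ^{d×m} be the horizontal concatenation with m = Σ_j m_j. Then the coding rate of the whole dataset is at least the sum of the coding rates of its parts: (m/2)·log det(I_d + (d/(mε²))·XXᵀ) ≥ Σ_{j=1}^k (m_j/2)·log det(I_d + (d/(m_jε²))·X^j(X^j)ᵀ). -/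
open Matrix BigOperators

/-!
`log det` is concave on positive definite matrices: writing `A = S²` with `S = √A` and
`B = S M S`, one has `log det (a A + b B) = log det A + ∑ᵢ log (a + b μᵢ)` over the eigenvalues
`μᵢ` of `M`, and each term dominates `b log μᵢ` by concavity of `log`. Since
`(1/m) ∑ⱼ mⱼ (I + d/(mⱼ ε²) Xʲ Xʲᵀ) = I + d/(m ε²) X Xᵀ`, the theorem is Jensen's inequality for
`log det` with weights `mⱼ / m`.
-/

open scoped MatrixOrder

section LogDet

variable {n : Type*} [Fintype n] [DecidableEq n]

theorem Matrix.IsHermitian.det_smul_one_add_smul_s13 {M : Matrix n n ℝ} (hM : M.IsHermitian)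
    (a b : ℝ) :
    (a • 1 + b • M).det = ∏ i, (a + b * hM.eigenvalues i) := by
  have hcfc : a • 1 + b • M = cfc (fun x => a + b * x) M := by
    rw [cfc_add .., cfc_const_mul .., cfc_id' .., cfc_const ..]
    simp [Algebra.algebraMap_eq_smul_one]
  rw [hcfc, hM.cfc_eq]
  simp [IsHermitian.cfc, -Unitary.conjStarAlgAut_apply]

omit [DecidableEq n] in
theorem Matrix.convex_setOf_posDef_s13 : Convex ℝ {A : Matrix n n ℝ | A.PosDef} := by
  intro A hA B hB a b ha hb hab
  refine .of_dotProduct_mulVec_pos ((hA.posSemidef.smul ha).1.add (hB.posSemidef.smul hb).1)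
    fun x hx => ?_
  rw [add_mulVec, smul_mulVec, smul_mulVec, dotProduct_add, dotProduct_smul, dotProduct_smul]
  exact (convex_Ioi (0 : ℝ)) (hA.dotProduct_mulVec_pos hx) (hB.dotProduct_mulVec_pos hx) ha hb hab

theorem Matrix.PosDef.mul_log_det_le_log_det_smul_one_add_smul_s13 {M : Matrix n n ℝ} (hM : M.PosDef)
    {a b : ℝ} (ha : 0 ≤ a) (hb : 0 ≤ b) (hab : a + b = 1) :
    b * Real.log M.det ≤ Real.log (a • 1 + b • M).det := by
  have hμ := hM.eigenvalues_pos
  have hpos : ∀ i, 0 < a + b * hM.1.eigenvalues i := fun i => by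
    simpa using (convex_Ioi (0 : ℝ)) (Set.mem_Ioi.2 one_pos) (hμ i) ha hb hab
  rw [hM.1.det_smul_one_add_smul_s13, hM.1.det_eq_prod_eigenvalues]
  simp only [RCLike.ofReal_real_eq_id, id]
  rw [Real.log_prod fun i _ => (hpos i).ne', Real.log_prod fun i _ => (hμ i).ne', Finset.mul_sum]
  gcongr with i
  simpa using strictConcaveOn_log_Ioi.concaveOn.2 (Set.mem_Ioi.2 one_pos) (hμ i) ha hb hab

theorem Matrix.concaveOn_log_det_s13 :
    ConcaveOn ℝ {A : Matrix n n ℝ | A.PosDef} fun A => Real.log A.det := by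
  refine ⟨convex_setOf_posDef_s13, fun A hA B hB a b ha hb hab => ?_⟩
  set S := CFC.sqrt A
  have hSS : S * S = A := CFC.sqrt_mul_sqrt_self A hA.posSemidef.nonneg
  have hSstar : star S = S := (CFC.sqrt_nonneg A).posSemidef.1
  have hSdet : IsUnit S.det := by
    refine isUnit_iff_ne_zero.2 (mul_self_pos.1 ?_)
    rw [← det_mul, hSS]
    exact hA.det_pos
  have log_det_conj : ∀ N : Matrix n n ℝ, N.PosDef →
      Real.log (S * N * S).det = Real.log A.det + Real.log N.det := fun N hN => by
    rw [← Real.log_mul hA.det_pos.ne' hN.det_pos.ne', ← hSS, det_mul, det_mul, det_mul]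
    ring_nf
  set M := S⁻¹ * B * S⁻¹
  have hM : M.PosDef := by
    have := hB.conjTranspose_mul_mul_same <| mulVec_injective_of_isUnit <|
      (isUnit_iff_isUnit_det _).2 (isUnit_nonsing_inv_det S hSdet)
    rwa [conjTranspose_nonsing_inv, ← star_eq_conjTranspose, hSstar] at this
  have hB_eq : B = S * M * S := by
    simp only [M, ← mul_assoc, mul_nonsing_inv S hSdet, one_mul]
    rw [mul_assoc, nonsing_inv_mul S hSdet, mul_one]
  have hcomb : a • A + b • B = S * (a • 1 + b • M) * S := by
    rw [hB_eq, ← hSS]; noncomm_ring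
  have key := hM.mul_log_det_le_log_det_smul_one_add_smul_s13 ha hb hab
  have hlogB := log_det_conj M hM
  rw [← hB_eq] at hlogB
  have hmid : (a • 1 + b • M).PosDef := convex_setOf_posDef_s13 PosDef.one hM ha hb hab
  simp only [smul_eq_mul, hcomb, log_det_conj _ hmid, hlogB]
  linear_combination key + Real.log A.det * hab

theorem Matrix.sum_mul_log_det_one_add_div_smul_le {ι : Type*} (s : Finset ι) {w : ι → ℝ}
    (hw : ∀ j ∈ s, 0 < w j) {G : ι → Matrix n n ℝ} (hG : ∀ j ∈ s, (G j).PosSemidef) {c : ℝ}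
    (hc : 0 ≤ c) :
    ∑ j ∈ s, w j * Real.log (1 + (c / w j) • G j).det ≤
      (∑ j ∈ s, w j) * Real.log (1 + (c / ∑ j ∈ s, w j) • ∑ j ∈ s, G j).det := by
  rcases s.eq_empty_or_nonempty with rfl | hs
  · simp
  set W := ∑ j ∈ s, w j
  have hW : 0 < W := Finset.sum_pos hw hs
  have hPD : ∀ j ∈ s, 1 + (c / w j) • G j ∈ {A : Matrix n n ℝ | A.PosDef} := fun j hj =>
    PosDef.one.add_posSemidef ((hG j hj).smul (div_nonneg hc (hw j hj).le))
  have hcenter : s.centerMass w (fun j => 1 + (c / w j) • G j) = 1 + (c / W) • ∑ j ∈ s, G j := by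
    have hterm : ∀ j ∈ s, w j • (1 + (c / w j) • G j) = w j • (1 : Matrix n n ℝ) + c • G j :=
      fun j hj => by rw [smul_add, smul_smul, mul_div_cancel₀ c (hw j hj).ne']
    rw [Finset.centerMass, Finset.sum_congr rfl hterm, Finset.sum_add_distrib, ← Finset.sum_smul,
      ← Finset.smul_sum, smul_add, smul_smul, smul_smul, inv_mul_cancel₀ hW.ne', one_smul,
      inv_mul_eq_div]
  have jensen := concaveOn_log_det_s13.le_map_centerMass (fun j hj => (hw j hj).le) hW hPD
  rw [hcenter, Finset.centerMass, smul_eq_mul, inv_mul_le_iff₀ hW] at jensen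
  simpa using jensen

end LogDet

theorem hconcat_mul_transpose {d k : ℕ} {m : Fin k → ℕ}
    (Xc : (j : Fin k) → Matrix (Fin d) (Fin (m j)) ℝ) :
    hconcat Xc * (hconcat Xc)ᵀ = ∑ j, Xc j * (Xc j)ᵀ := by
  ext i i'
  simp [hconcat, Matrix.mul_apply, Matrix.sum_apply, Fintype.sum_sigma]

theorem stmt13_general (ε : ℝ) (d k : ℕ)
    (m : Fin k → ℕ) (hm : ∀ j, 1 ≤ m j)
    (Xc : (j : Fin k) → Matrix (Fin d) (Fin (m j)) ℝ) :
    ((∑ j, m j : ℕ) : ℝ) / 2 *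
        Real.log
          (Matrix.det
            ((1 : Matrix (Fin d) (Fin d) ℝ) +
              ((d : ℝ) / (((∑ j, m j : ℕ) : ℝ) * ε ^ 2)) •
                (hconcat Xc * (hconcat Xc)ᵀ)))
    ≥ ∑ j,
        (m j : ℝ) / 2 *
          Real.log
            (Matrix.det
              ((1 : Matrix (Fin d) (Fin d) ℝ) +
                ((d : ℝ) / ((m j : ℝ) * ε ^ 2)) • (Xc j * (Xc j)ᵀ))) := by
  have hgram : ∀ j ∈ Finset.univ, (Xc j * (Xc j)ᵀ).PosSemidef := fun j _ => by
    simpa using posSemidef_self_mul_conjTranspose (Xc j)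
  have hc : 0 ≤ (d : ℝ) / ε ^ 2 := by positivity
  have key := sum_mul_log_det_one_add_div_smul_le Finset.univ
    (fun j _ => (by exact_mod_cast hm j : (0 : ℝ) < m j)) hgram hc
  simp only [div_mul_eq_div_div_swap, Nat.cast_sum, hconcat_mul_transpose]
  simp only [div_mul_eq_mul_div, ← Finset.sum_div]
  exact div_le_div_of_nonneg_right key zero_le_two

theorem stmt13 (ε : ℝ) (hε : 0 < ε) (d k : ℕ) (hd : 1 ≤ d) (hk : 1 ≤ k)
    (m : Fin k → ℕ) (hm : ∀ j, 1 ≤ m j)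
    (Xc : (j : Fin k) → Matrix (Fin d) (Fin (m j)) ℝ) :
    ((∑ j, m j : ℕ) : ℝ) / 2 *
        Real.log
          (Matrix.det
            ((1 : Matrix (Fin d) (Fin d) ℝ) +
              ((d : ℝ) / (((∑ j, m j : ℕ) : ℝ) * ε ^ 2)) •
                (hconcat Xc * (hconcat Xc)ᵀ)))
    ≥ ∑ j,
        (m j : ℝ) / 2 *
          Real.log
            (Matrix.det
              ((1 : Matrix (Fin d) (Fin d) ℝ) +
                ((d : ℝ) / ((m j : ℝ) * ε ^ 2)) • (Xc j * (Xc j)ᵀ))) :=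
  stmt13_general ε d k m hm Xc
end
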